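/- arXiv:2205.04968 — 5 statements merged into one kernel-verified Lean document; each statement's English description precedes it below -/
import Mathlib

section
/- Let φ, ψ : (0,∞) → ℝ be two nonincreasing nonnegative functions, and let X, Y, Z ∈ ℝ² \ {0} satisfy X + Y + Z = 0. Then the inner product (φ(‖X‖)·X + φ(‖Y‖)·Y + φ(‖Z‖)·Z) · (ψ(‖X‖)·X + ψ(‖Y‖)·Y + ψ(‖Z‖)·Z) is nonnegative. -/
open scoped RealInnerProductSpace

private lemma sorted_case (φ ψ : ℝ → ℝ)
    (hφ_anti : AntitoneOn φ (Set.Ioi 0)) (hψ_anti : AntitoneOn ψ (Set.Ioi 0))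
    (X Y Z : EuclideanSpace ℝ (Fin 2))
    (hX : X ≠ 0) (hY : Y ≠ 0) (hZ : Z ≠ 0)
    (hsum : X + Y + Z = 0)
    (hab : ‖X‖ ≤ ‖Y‖) (hbc : ‖Y‖ ≤ ‖Z‖) :
    0 ≤ ⟪φ ‖X‖ • X + φ ‖Y‖ • Y + φ ‖Z‖ • Z,
        ψ ‖X‖ • X + ψ ‖Y‖ • Y + ψ ‖Z‖ • Z⟫ := by
  have haX : ‖X‖ ∈ Set.Ioi (0:ℝ) := Set.mem_Ioi.mpr (norm_pos_iff.mpr hX)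
  have haY : ‖Y‖ ∈ Set.Ioi (0:ℝ) := Set.mem_Ioi.mpr (norm_pos_iff.mpr hY)
  have haZ : ‖Z‖ ∈ Set.Ioi (0:ℝ) := Set.mem_Ioi.mpr (norm_pos_iff.mpr hZ)
  have hp : 0 ≤ φ ‖X‖ - φ ‖Y‖ := sub_nonneg.mpr (hφ_anti haX haY hab)
  have hq : 0 ≤ φ ‖Y‖ - φ ‖Z‖ := sub_nonneg.mpr (hφ_anti haY haZ hbc)
  have hp' : 0 ≤ ψ ‖X‖ - ψ ‖Y‖ := sub_nonneg.mpr (hψ_anti haX haY hab)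
  have hq' : 0 ≤ ψ ‖Y‖ - ψ ‖Z‖ := sub_nonneg.mpr (hψ_anti haY haZ hbc)
  have hW : X + Y = -Z := add_eq_zero_iff_eq_neg.mp hsum
  have hnW : ‖X + Y‖ = ‖Z‖ := by rw [hW, norm_neg]
  have key : 0 ≤ ⟪X, X + Y⟫ := by
    have h1 : ‖X + Y‖ ^ 2 = ‖X‖ ^ 2 + 2 * ⟪X, Y⟫ + ‖Y‖ ^ 2 := norm_add_sq_real X Y
    rw [hnW] at h1
    have h2 : ⟪X, X + Y⟫ = ‖X‖ ^ 2 + ⟪X, Y⟫ := by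
      rw [inner_add_right, real_inner_self_eq_norm_sq]
    rw [h2]
    nlinarith [mul_nonneg (sub_nonneg.mpr hbc)
        (add_nonneg (norm_nonneg Z) (norm_nonneg Y)), sq_nonneg ‖X‖]
  have hZeq : Z = -(X + Y) := by rw [hW, neg_neg]
  have eφ : φ ‖X‖ • X + φ ‖Y‖ • Y + φ ‖Z‖ • Z
      = (φ ‖X‖ - φ ‖Y‖) • X + (φ ‖Y‖ - φ ‖Z‖) • (X + Y) := by
    rw [hZeq]; module
  have eψ : ψ ‖X‖ • X + ψ ‖Y‖ • Y + ψ ‖Z‖ • Z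
      = (ψ ‖X‖ - ψ ‖Y‖) • X + (ψ ‖Y‖ - ψ ‖Z‖) • (X + Y) := by
    rw [hZeq]; module
  rw [eφ, eψ]
  set W := X + Y with hWdef
  simp only [inner_add_left, inner_add_right, real_inner_smul_left, real_inner_smul_right]
  have hXX : 0 ≤ ⟪X, X⟫ := real_inner_self_nonneg
  have hWW : 0 ≤ ⟪W, W⟫ := real_inner_self_nonneg
  have hWX : ⟪W, X⟫ = ⟪X, W⟫ := real_inner_comm _ _
  rw [hWX]
  nlinarith [mul_nonneg (mul_nonneg hp hp') hXX, mul_nonneg (mul_nonneg hq hq') hWW,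
    mul_nonneg (mul_nonneg hp hq') key, mul_nonneg (mul_nonneg hq hp') key]

theorem stmt_0 (φ ψ : ℝ → ℝ)
    (hφ_anti : AntitoneOn φ (Set.Ioi 0)) (hψ_anti : AntitoneOn ψ (Set.Ioi 0))
    (hφ_nonneg : ∀ r > (0 : ℝ), 0 ≤ φ r) (hψ_nonneg : ∀ r > (0 : ℝ), 0 ≤ ψ r)
    (X Y Z : EuclideanSpace ℝ (Fin 2))
    (hX : X ≠ 0) (hY : Y ≠ 0) (hZ : Z ≠ 0)
    (hsum : X + Y + Z = 0) :
    0 ≤ ⟪φ ‖X‖ • X + φ ‖Y‖ • Y + φ ‖Z‖ • Z,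
        ψ ‖X‖ • X + ψ ‖Y‖ • Y + ψ ‖Z‖ • Z⟫ := by
  rcases le_total ‖X‖ ‖Y‖ with h1 | h1 <;>
    rcases le_total ‖Y‖ ‖Z‖ with h2 | h2 <;>
      rcases le_total ‖X‖ ‖Z‖ with h3 | h3
  · exact sorted_case φ ψ hφ_anti hψ_anti X Y Z hX hY hZ hsum h1 h2
  · exact sorted_case φ ψ hφ_anti hψ_anti X Y Z hX hY hZ hsum h1 h2
  · have h := sorted_case φ ψ hφ_anti hψ_anti X Z Y hX hZ hY
      (by rw [← hsum]; abel) h3 h2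
    have e1 : φ ‖X‖ • X + φ ‖Z‖ • Z + φ ‖Y‖ • Y
        = φ ‖X‖ • X + φ ‖Y‖ • Y + φ ‖Z‖ • Z := by module
    have e2 : ψ ‖X‖ • X + ψ ‖Z‖ • Z + ψ ‖Y‖ • Y
        = ψ ‖X‖ • X + ψ ‖Y‖ • Y + ψ ‖Z‖ • Z := by module
    rwa [e1, e2] at h
  · have h := sorted_case φ ψ hφ_anti hψ_anti Z X Y hZ hX hY
      (by rw [← hsum]; abel) h3 h1
    have e1 : φ ‖Z‖ • Z + φ ‖X‖ • X + φ ‖Y‖ • Y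
        = φ ‖X‖ • X + φ ‖Y‖ • Y + φ ‖Z‖ • Z := by module
    have e2 : ψ ‖Z‖ • Z + ψ ‖X‖ • X + ψ ‖Y‖ • Y
        = ψ ‖X‖ • X + ψ ‖Y‖ • Y + ψ ‖Z‖ • Z := by module
    rwa [e1, e2] at h
  · have h := sorted_case φ ψ hφ_anti hψ_anti Y X Z hY hX hZ
      (by rw [← hsum]; abel) h1 h3
    have e1 : φ ‖Y‖ • Y + φ ‖X‖ • X + φ ‖Z‖ • Z
        = φ ‖X‖ • X + φ ‖Y‖ • Y + φ ‖Z‖ • Z := by module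
    have e2 : ψ ‖Y‖ • Y + ψ ‖X‖ • X + ψ ‖Z‖ • Z
        = ψ ‖X‖ • X + ψ ‖Y‖ • Y + ψ ‖Z‖ • Z := by module
    rwa [e1, e2] at h
  · have h := sorted_case φ ψ hφ_anti hψ_anti Y Z X hY hZ hX
      (by rw [← hsum]; abel) h2 h3
    have e1 : φ ‖Y‖ • Y + φ ‖Z‖ • Z + φ ‖X‖ • X
        = φ ‖X‖ • X + φ ‖Y‖ • Y + φ ‖Z‖ • Z := by module
    have e2 : ψ ‖Y‖ • Y + ψ ‖Z‖ • Z + ψ ‖X‖ • X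
        = ψ ‖X‖ • X + ψ ‖Y‖ • Y + ψ ‖Z‖ • Z := by module
    rwa [e1, e2] at h
  · have h := sorted_case φ ψ hφ_anti hψ_anti Z Y X hZ hY hX
      (by rw [← hsum]; abel) h2 h1
    have e1 : φ ‖Z‖ • Z + φ ‖Y‖ • Y + φ ‖X‖ • X
        = φ ‖X‖ • X + φ ‖Y‖ • Y + φ ‖Z‖ • Z := by module
    have e2 : ψ ‖Z‖ • Z + ψ ‖Y‖ • Y + ψ ‖X‖ • X
        = ψ ‖X‖ • X + ψ ‖Y‖ • Y + ψ ‖Z‖ • Z := by module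
    rwa [e1, e2] at h
  · have h := sorted_case φ ψ hφ_anti hψ_anti Z Y X hZ hY hX
      (by rw [← hsum]; abel) h2 h1
    have e1 : φ ‖Z‖ • Z + φ ‖Y‖ • Y + φ ‖X‖ • X
        = φ ‖X‖ • X + φ ‖Y‖ • Y + φ ‖Z‖ • Z := by module
    have e2 : ψ ‖Z‖ • Z + ψ ‖Y‖ • Y + ψ ‖X‖ • X
        = ψ ‖X‖ • X + ψ ‖Y‖ • Y + ψ ‖Z‖ • Z := by module
    rwa [e1, e2] at h
end

section
/- Let φ, ψ : (0,∞) → ℝ be nonincreasing nonnegative functions, and let X, Y, Z ∈ ℝ² \ {0} satisfy X + Y + Z = 0 and ‖X‖ ≤ ‖Y‖ ≤ ‖Z‖. Then (φ(‖X‖)X + φ(‖Y‖)Y + φ(‖Z‖)Z) · (ψ(‖X‖)X + ψ(‖Y‖)Y + ψ(‖Z‖)Z) ≥ (φ(‖X‖) − φ(‖Y‖))(ψ(‖X‖) − ψ(‖Y‖))‖X‖². -/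
open scoped RealInnerProductSpace

theorem stmt_1 (φ ψ : ℝ → ℝ)
    (hφ_anti : AntitoneOn φ (Set.Ioi 0)) (hψ_anti : AntitoneOn ψ (Set.Ioi 0))
    (hφ_nonneg : ∀ r > (0 : ℝ), 0 ≤ φ r) (hψ_nonneg : ∀ r > (0 : ℝ), 0 ≤ ψ r)
    (X Y Z : EuclideanSpace ℝ (Fin 2))
    (hX : X ≠ 0) (hY : Y ≠ 0) (hZ : Z ≠ 0)
    (hsum : X + Y + Z = 0)
    (hXY : ‖X‖ ≤ ‖Y‖) (hYZ : ‖Y‖ ≤ ‖Z‖) :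
    (φ ‖X‖ - φ ‖Y‖) * (ψ ‖X‖ - ψ ‖Y‖) * ‖X‖ ^ 2 ≤
      ⟪φ ‖X‖ • X + φ ‖Y‖ • Y + φ ‖Z‖ • Z,
        ψ ‖X‖ • X + ψ ‖Y‖ • Y + ψ ‖Z‖ • Z⟫ := by
  have hx : (0:ℝ) < ‖X‖ := norm_pos_iff.mpr hX
  have hy : (0:ℝ) < ‖Y‖ := norm_pos_iff.mpr hY
  have hz : (0:ℝ) < ‖Z‖ := norm_pos_iff.mpr hZ
  have hmx : ‖X‖ ∈ Set.Ioi (0:ℝ) := hx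
  have hmy : ‖Y‖ ∈ Set.Ioi (0:ℝ) := hy
  have hmz : ‖Z‖ ∈ Set.Ioi (0:ℝ) := hz
  have hφ1 : φ ‖Y‖ ≤ φ ‖X‖ := hφ_anti hmx hmy hXY
  have hφ2 : φ ‖Z‖ ≤ φ ‖Y‖ := hφ_anti hmy hmz hYZ
  have hψ1 : ψ ‖Y‖ ≤ ψ ‖X‖ := hψ_anti hmx hmy hXY
  have hψ2 : ψ ‖Z‖ ≤ ψ ‖Y‖ := hψ_anti hmy hmz hYZ
  have hφ0 : 0 ≤ φ ‖Z‖ := hφ_nonneg _ hz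
  have hψ0 : 0 ≤ ψ ‖Z‖ := hψ_nonneg _ hz
  have hxy2 : ‖X‖ ^ 2 ≤ ‖Y‖ ^ 2 := pow_le_pow_left₀ hx.le hXY 2
  have hyz2 : ‖Y‖ ^ 2 ≤ ‖Z‖ ^ 2 := pow_le_pow_left₀ hy.le hYZ 2
  set a := φ ‖X‖ with ha
  set b := φ ‖Y‖ with hb
  set c := φ ‖Z‖ with hc
  set p := ψ ‖X‖ with hp
  set q := ψ ‖Y‖ with hq
  set r := ψ ‖Z‖ with hr
  have hZ' : Z = -(X + Y) := eq_neg_of_add_eq_zero_right hsum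
  have hnZ : ‖Z‖ ^ 2 = ‖X‖ ^ 2 + 2 * ⟪X, Y⟫ + ‖Y‖ ^ 2 := by
    rw [hZ', norm_neg]; exact norm_add_sq_real X Y
  have ht : -‖X‖ ^ 2 ≤ 2 * ⟪X, Y⟫ := by linarith
  rw [hZ']
  simp only [inner_add_left, inner_add_right, real_inner_smul_left, real_inner_smul_right,
    inner_neg_left, inner_neg_right, real_inner_self_eq_norm_sq]
  simp only [real_inner_comm X Y] at hnZ ht ⊢
  nlinarith [mul_nonneg (add_nonneg (mul_nonneg (by linarith : (0:ℝ) ≤ a - c)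
      (by linarith : (0:ℝ) ≤ q - r)) (mul_nonneg (by linarith : (0:ℝ) ≤ b - c)
      (by linarith : (0:ℝ) ≤ p - r))) (by linarith : (0:ℝ) ≤ 2 * ⟪X, Y⟫ + ‖X‖ ^ 2),
    mul_nonneg (mul_nonneg (by linarith : (0:ℝ) ≤ b - c) (by linarith : (0:ℝ) ≤ q - r))
      (by linarith : (0:ℝ) ≤ ‖Y‖ ^ 2 - ‖X‖ ^ 2),
    mul_nonneg (add_nonneg (mul_nonneg (by linarith : (0:ℝ) ≤ a - c)
      (by linarith : (0:ℝ) ≤ q - r)) (mul_nonneg (by linarith : (0:ℝ) ≤ b - c)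
      (by linarith : (0:ℝ) ≤ p - r))) (sq_nonneg ‖X‖)]
end

section
/- For N ≥ 2 and x = (x¹,…,xᴺ) ∈ (ℝ²)ᴺ with x¹,…,xᴺ pairwise distinct, the sum S(x) = Σ over distinct triples (i,j,k) in {1,…,N}³ of ((xⁱ−xᵏ)/‖xⁱ−xᵏ‖² + (xᵏ−xʲ)/‖xᵏ−xʲ‖²) · (xⁱ−xʲ) equals N(N−1)(N−2). -/
open scoped RealInnerProductSpace

lemma key_3 (p q r : EuclideanSpace ℝ (Fin 2)) (hpq : p ≠ q) (hqr : q ≠ r) (hpr : p ≠ r) :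
    ⟪(‖p-r‖^2)⁻¹ • (p-r) + (‖r-q‖^2)⁻¹ • (r-q), p-q⟫ +
    ⟪(‖q-p‖^2)⁻¹ • (q-p) + (‖p-r‖^2)⁻¹ • (p-r), q-r⟫ +
    ⟪(‖r-q‖^2)⁻¹ • (r-q) + (‖q-p‖^2)⁻¹ • (q-p), r-p⟫ = 3 := by
  have hA : (‖p-r‖^2 : ℝ) ≠ 0 := pow_ne_zero _ (norm_ne_zero_iff.mpr (sub_ne_zero.mpr hpr))
  have hB : (‖r-q‖^2 : ℝ) ≠ 0 := pow_ne_zero _ (norm_ne_zero_iff.mpr (sub_ne_zero.mpr (Ne.symm hqr)))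
  have hC : (‖q-p‖^2 : ℝ) ≠ 0 := pow_ne_zero _ (norm_ne_zero_iff.mpr (sub_ne_zero.mpr (Ne.symm hpq)))
  have h1 : ⟪p-r, p-q⟫ + ⟪p-r, q-r⟫ = ‖p-r‖^2 := by
    rw [← inner_add_right, show (p-q)+(q-r) = p-r by abel, real_inner_self_eq_norm_sq]
  have h2 : ⟪r-q, p-q⟫ + ⟪r-q, r-p⟫ = ‖r-q‖^2 := by
    rw [← inner_add_right, show (p-q)+(r-p) = r-q by abel, real_inner_self_eq_norm_sq]
  have h3 : ⟪q-p, q-r⟫ + ⟪q-p, r-p⟫ = ‖q-p‖^2 := by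
    rw [← inner_add_right, show (q-r)+(r-p) = q-p by abel, real_inner_self_eq_norm_sq]
  simp only [inner_add_left, real_inner_smul_left]
  rw [show ∀ a b c d e f A B C : ℝ, (A⁻¹*a + B⁻¹*b) + (C⁻¹*c + A⁻¹*d) + (B⁻¹*e + C⁻¹*f)
      = A⁻¹*(a+d) + B⁻¹*(b+e) + C⁻¹*(c+f) from fun _ _ _ _ _ _ _ _ _ => by ring,
    h1, h2, h3, inv_mul_cancel₀ hA, inv_mul_cancel₀ hB, inv_mul_cancel₀ hC]
  norm_num

lemma cyc_3 {N : ℕ} (G : Fin N → Fin N → Fin N → ℝ) :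
    (∑ i : Fin N, ∑ j : Fin N, ∑ k : Fin N, G j k i)
      = ∑ i : Fin N, ∑ j : Fin N, ∑ k : Fin N, G i j k := by
  rw [Finset.sum_comm]
  exact Finset.sum_congr rfl fun j _ => Finset.sum_comm

lemma count_3 {N : ℕ} (hN : 2 ≤ N) :
    (∑ i : Fin N, ∑ j : Fin N, ∑ k : Fin N,
      (if i ≠ j ∧ j ≠ k ∧ i ≠ k then (3:ℝ) else 0))
    = 3 * ((N : ℝ) * (N - 1) * (N - 2)) := by
  have hinner : ∀ i j : Fin N, i ≠ j →
      (∑ k : Fin N, (if i ≠ j ∧ j ≠ k ∧ i ≠ k then (3:ℝ) else 0)) = 3 * ((N:ℝ) - 2) := by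
    intro i j hij
    have hfil : Finset.univ.filter (fun k : Fin N => i ≠ j ∧ j ≠ k ∧ i ≠ k)
        = ({j, i} : Finset (Fin N))ᶜ := by
      ext k
      simp only [Finset.mem_filter, Finset.mem_univ, true_and, Finset.mem_compl,
        Finset.mem_insert, Finset.mem_singleton, hij, true_and]
      push_neg
      exact ⟨fun h => ⟨Ne.symm h.2.1, Ne.symm h.2.2⟩, fun h => ⟨hij, Ne.symm h.1, Ne.symm h.2⟩⟩
    have hcard : (({j, i} : Finset (Fin N))ᶜ).card = N - 2 := by
      rw [Finset.card_compl, Finset.card_insert_of_notMem (by simp [hij.symm]),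
        Finset.card_singleton, Fintype.card_fin]
    calc (∑ k : Fin N, (if i ≠ j ∧ j ≠ k ∧ i ≠ k then (3:ℝ) else 0))
        = ∑ k : Fin N, (3:ℝ) * (if i ≠ j ∧ j ≠ k ∧ i ≠ k then 1 else 0) := by
          simp [mul_boole]
      _ = 3 * ((Finset.univ.filter (fun k : Fin N => i ≠ j ∧ j ≠ k ∧ i ≠ k)).card : ℝ) := by
          rw [← Finset.mul_sum, Finset.sum_boole]
      _ = 3 * ((N:ℝ) - 2) := by
          rw [hfil, hcard]
          congr 1
          push_cast [Nat.cast_sub hN]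
          ring
  have hmid : ∀ i : Fin N,
      (∑ j : Fin N, ∑ k : Fin N, (if i ≠ j ∧ j ≠ k ∧ i ≠ k then (3:ℝ) else 0))
      = ((N:ℝ) - 1) * (3 * ((N:ℝ) - 2)) := by
    intro i
    have step : ∀ j : Fin N,
        (∑ k : Fin N, (if i ≠ j ∧ j ≠ k ∧ i ≠ k then (3:ℝ) else 0))
        = if i ≠ j then 3 * ((N:ℝ) - 2) else 0 := by
      intro j
      by_cases hij : i = j
      · simp [hij]
      · simp only [hij, if_pos (Ne.intro hij)]
        exact hinner i j hij
    rw [Finset.sum_congr rfl fun j _ => step j]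
    have hfil : Finset.univ.filter (fun j : Fin N => i ≠ j) = ({i} : Finset (Fin N))ᶜ := by
      ext j; simp [ne_comm, eq_comm]
    calc (∑ j : Fin N, if i ≠ j then 3 * ((N:ℝ) - 2) else 0)
        = ∑ j : Fin N, (3 * ((N:ℝ) - 2)) * (if i ≠ j then 1 else 0) := by simp [mul_boole]
      _ = (3 * ((N:ℝ) - 2)) * ((Finset.univ.filter (fun j : Fin N => i ≠ j)).card : ℝ) := by
          rw [← Finset.mul_sum, Finset.sum_boole]
      _ = ((N:ℝ) - 1) * (3 * ((N:ℝ) - 2)) := by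
          rw [hfil, Finset.card_compl, Finset.card_singleton, Fintype.card_fin]
          rw [Nat.cast_sub (by omega)]
          push_cast
          ring
  rw [Finset.sum_congr rfl fun i _ => hmid i, Finset.sum_const, Finset.card_univ,
    Fintype.card_fin, nsmul_eq_mul]
  ring

theorem stmt_3 (N : ℕ) (hN : 2 ≤ N)
    (x : Fin N → EuclideanSpace ℝ (Fin 2))
    (hx : Function.Injective x) :
    (∑ i : Fin N, ∑ j : Fin N, ∑ k : Fin N,
      if i ≠ j ∧ j ≠ k ∧ i ≠ k then
        ⟪(‖x i - x k‖ ^ 2)⁻¹ • (x i - x k) + (‖x k - x j‖ ^ 2)⁻¹ • (x k - x j),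
          x i - x j⟫
      else 0)
    = (N : ℝ) * (N - 1) * (N - 2) := by
  set F : Fin N → Fin N → Fin N → ℝ := fun i j k =>
    if i ≠ j ∧ j ≠ k ∧ i ≠ k then
      ⟪(‖x i - x k‖ ^ 2)⁻¹ • (x i - x k) + (‖x k - x j‖ ^ 2)⁻¹ • (x k - x j), x i - x j⟫
    else 0 with hF
  have hpt : ∀ i j k : Fin N, F i j k + F j k i + F k i j
      = if i ≠ j ∧ j ≠ k ∧ i ≠ k then (3:ℝ) else 0 := by
    intro i j k
    by_cases h : i ≠ j ∧ j ≠ k ∧ i ≠ k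
    · obtain ⟨h1, h2, h3⟩ := h
      have c2 : j ≠ k ∧ k ≠ i ∧ j ≠ i := ⟨h2, Ne.symm h3, Ne.symm h1⟩
      have c3 : k ≠ i ∧ i ≠ j ∧ k ≠ j := ⟨Ne.symm h3, h1, Ne.symm h2⟩
      rw [hF]
      simp only [if_pos (⟨h1, h2, h3⟩ : i ≠ j ∧ j ≠ k ∧ i ≠ k), if_pos c2, if_pos c3]
      exact key_3 (x i) (x j) (x k) (fun he => h1 (hx he)) (fun he => h2 (hx he))
        (fun he => h3 (hx he))
    · have c2 : ¬(j ≠ k ∧ k ≠ i ∧ j ≠ i) := fun hc => h ⟨Ne.symm hc.2.2, hc.1, Ne.symm hc.2.1⟩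
      have c3 : ¬(k ≠ i ∧ i ≠ j ∧ k ≠ j) := fun hc => h ⟨hc.2.1, Ne.symm hc.2.2, Ne.symm hc.1⟩
      rw [hF]
      simp only [if_neg h, if_neg c2, if_neg c3, add_zero]
  have hsum : (∑ i : Fin N, ∑ j : Fin N, ∑ k : Fin N, (F i j k + F j k i + F k i j))
      = (∑ i : Fin N, ∑ j : Fin N, ∑ k : Fin N, F i j k)
        + (∑ i : Fin N, ∑ j : Fin N, ∑ k : Fin N, F i j k)
        + (∑ i : Fin N, ∑ j : Fin N, ∑ k : Fin N, F i j k) := by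
    simp only [Finset.sum_add_distrib]
    rw [cyc_3 (fun a b c => F b c a), cyc_3 F]
  have hcount := count_3 (N := N) hN
  have hkey : (∑ i : Fin N, ∑ j : Fin N, ∑ k : Fin N, (F i j k + F j k i + F k i j))
      = 3 * ((N : ℝ) * (N - 1) * (N - 2)) := by
    rw [Finset.sum_congr rfl fun i _ => Finset.sum_congr rfl fun j _ =>
      Finset.sum_congr rfl fun k _ => hpt i j k]
    exact hcount
  have : (∑ i : Fin N, ∑ j : Fin N, ∑ k : Fin N, F i j k)
      = (N : ℝ) * (N - 1) * (N - 2) := by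
    rw [hsum] at hkey; linarith
  exact this
end

section
/- Let K(z) = −z/‖z‖² for z ∈ ℝ² \ {0} and K(0) = 0. Then for all distinct x¹,…,xᴺ ∈ ℝ², the sum Σ over pairs i ≠ j of K(xⁱ−xʲ)·(‖xⁱ‖⁴xⁱ − ‖xʲ‖⁴xʲ) is nonpositive; equivalently, Σ_{i≠j} K(xⁱ−xʲ)·‖xⁱ‖⁴xⁱ ≤ 0. -/
open scoped RealInnerProductSpace

open Classical in
noncomputable def Kker (z : EuclideanSpace ℝ (Fin 2)) : EuclideanSpace ℝ (Fin 2) :=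
  if z = 0 then 0 else -(‖z‖ ^ 2)⁻¹ • z

lemma Kker_neg (z : EuclideanSpace ℝ (Fin 2)) : Kker (-z) = -Kker z := by
  unfold Kker
  by_cases h : z = 0
  · simp [h]
  · rw [if_neg h, if_neg (neg_ne_zero.mpr h), norm_neg, smul_neg]

lemma mono_aux (a b : EuclideanSpace ℝ (Fin 2)) :
    0 ≤ ⟪a - b, ‖a‖ ^ 4 • a - ‖b‖ ^ 4 • b⟫ := by
  rw [inner_sub_left, inner_sub_right, inner_sub_right, real_inner_smul_right,
    real_inner_smul_right, real_inner_smul_right, real_inner_smul_right,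
    real_inner_self_eq_norm_sq, real_inner_self_eq_norm_sq]
  rw [real_inner_comm a b]
  have h1 := (abs_le.mp (abs_real_inner_le_norm a b)).2
  have ha := norm_nonneg a
  have hb := norm_nonneg b
  have hub := mul_le_mul_of_nonneg_left h1 (by positivity : (0:ℝ) ≤ ‖a‖ ^ 4 + ‖b‖ ^ 4)
  nlinarith [hub, mul_nonneg (sq_nonneg (‖a‖ - ‖b‖))
    (by positivity : (0:ℝ) ≤ ‖a‖^4 + ‖a‖^3*‖b‖ + ‖a‖^2*‖b‖^2 + ‖a‖*‖b‖^3 + ‖b‖^4)]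

lemma term_nonpos (a b : EuclideanSpace ℝ (Fin 2)) (h : a ≠ b) :
    ⟪Kker (a - b), ‖a‖ ^ 4 • a - ‖b‖ ^ 4 • b⟫ ≤ 0 := by
  have hz : a - b ≠ 0 := sub_ne_zero.mpr h
  rw [Kker, if_neg hz, neg_smul, inner_neg_left, real_inner_smul_left]
  have := mono_aux a b
  have : 0 ≤ (‖a - b‖ ^ 2)⁻¹ * ⟪a - b, ‖a‖ ^ 4 • a - ‖b‖ ^ 4 • b⟫ :=
    mul_nonneg (inv_nonneg.mpr (by positivity)) this
  linarith

theorem stmt_10 (N : ℕ) (x : Fin N → EuclideanSpace ℝ (Fin 2))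
    (hx : Function.Injective x) :
    (∑ i : Fin N, ∑ j : Fin N,
      if i ≠ j then ⟪Kker (x i - x j), ‖x i‖ ^ 4 • x i - ‖x j‖ ^ 4 • x j⟫ else 0) ≤ 0
    ∧
    (∑ i : Fin N, ∑ j : Fin N,
      if i ≠ j then ⟪Kker (x i - x j), ‖x i‖ ^ 4 • x i⟫ else 0) ≤ 0 := by
  have hS1 : (∑ i : Fin N, ∑ j : Fin N,
      if i ≠ j then ⟪Kker (x i - x j), ‖x i‖ ^ 4 • x i - ‖x j‖ ^ 4 • x j⟫ else 0) ≤ 0 := by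
    apply Finset.sum_nonpos
    intro i _
    apply Finset.sum_nonpos
    intro j _
    split_ifs with h
    · exact term_nonpos _ _ fun he => h (hx he)
    · exact le_rfl
  refine ⟨hS1, ?_⟩
  have hswap : (∑ i : Fin N, ∑ j : Fin N,
        if i ≠ j then ⟪Kker (x i - x j), ‖x i‖ ^ 4 • x i⟫ else 0)
      = ∑ i : Fin N, ∑ j : Fin N,
        if i ≠ j then -⟪Kker (x i - x j), ‖x j‖ ^ 4 • x j⟫ else 0 := by
    rw [Finset.sum_comm]
    apply Finset.sum_congr rfl
    intro i _
    apply Finset.sum_congr rfl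
    intro j _
    by_cases h : i = j
    · simp [h]
    · rw [if_pos (Ne.symm h), if_pos h, show x j - x i = -(x i - x j) by abel, Kker_neg,
        inner_neg_left]
  have key : (∑ i : Fin N, ∑ j : Fin N,
        if i ≠ j then ⟪Kker (x i - x j), ‖x i‖ ^ 4 • x i⟫ else 0)
      + (∑ i : Fin N, ∑ j : Fin N,
        if i ≠ j then ⟪Kker (x i - x j), ‖x i‖ ^ 4 • x i⟫ else 0)
      = ∑ i : Fin N, ∑ j : Fin N,
        if i ≠ j then ⟪Kker (x i - x j), ‖x i‖ ^ 4 • x i - ‖x j‖ ^ 4 • x j⟫ else 0 := by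
    nth_rewrite 2 [hswap]
    rw [← Finset.sum_add_distrib]
    apply Finset.sum_congr rfl
    intro i _
    rw [← Finset.sum_add_distrib]
    apply Finset.sum_congr rfl
    intro j _
    by_cases h : i = j
    · simp [h]
    · rw [if_pos h, if_pos h, if_pos h, inner_sub_right]
      ring
  linarith
end

section
/- Let x, y, z ∈ ℝ² be pairwise distinct, set X = x−y, Y = y−z, Z = z−x, and let K(w) = −w/‖w‖² for w ≠ 0, K(0)=0. Let L_η(r) = log(1+1/(η+r)) − 1/(1+η+r) for η > 0. Then L_η(‖X‖²)[1 + X·(Z/‖Z‖² + Y/‖Y‖²)] + L_η(‖Y‖²)[1 + Y·(X/‖X‖² + Z/‖Z‖²)] + L_η(‖Z‖²)[1 + Z·(Y/‖Y‖² + X/‖X‖²)] = (L_η(‖X‖²)X + L_η(‖Y‖²)Y + L_η(‖Z‖²)Z) · (X/‖X‖² + Y/‖Y‖² + Z/‖Z‖²), and this quantity is nonnegative. -/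
/-!
Since `X + Y + Z = 0`, the vector `Z = -(X + Y)` can be eliminated; after sorting the norms,
`‖X‖ ≤ ‖Y‖ ≤ ‖X + Y‖`, the inequality becomes `0 ≤ ⟪a • X + b • Y, c • X + d • Y⟫` with
`a ≥ b ≥ 0` and `c ≥ d ≥ 0` the differences of the (antitone) weights. The only negative
contribution is `(a d + b c) ⟪X, Y⟫`, and `‖Y‖ ≤ ‖X + Y‖` says exactly `⟪X, Y⟫ ≥ -‖X‖² / 2`,
which `‖X‖ ≤ ‖Y‖` lets the diagonal terms absorb.
The weights `L_η(‖·‖²)` and `‖·‖⁻²` are antitone in the norm, and `⟪X, X / ‖X‖²⟫ = 1` gives the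
identity.
-/

open scoped RealInnerProductSpace
open Real Set

theorem antitoneOn_log_one_add_inv_sub_inv_one_add :
    AntitoneOn (fun u : ℝ => log (1 + 1 / u) - 1 / (1 + u)) (Ioi 0) := by
  intro u (hu : 0 < u) v (hv : 0 < v) huv
  have hlog : 1 - ((1 + 1 / u) / (1 + 1 / v))⁻¹ ≤ log (1 + 1 / u) - log (1 + 1 / v) := by
    rw [← log_div (by positivity) (by positivity)]
    exact one_sub_inv_le_log_of_pos (by positivity)
  have hratio : 1 / (1 + u) - 1 / (1 + v) ≤ 1 - ((1 + 1 / u) / (1 + 1 / v))⁻¹ := by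
    have e₁ : 1 / (1 + u) - 1 / (1 + v) = (v - u) / ((1 + u) * (1 + v)) := by
      field_simp; ring
    have e₂ : 1 - ((1 + 1 / u) / (1 + 1 / v))⁻¹ = (v - u) / ((1 + u) * v) := by
      field_simp; ring
    rw [e₁, e₂]
    gcongr
    linarith
  dsimp only
  linarith

section InnerProductSpace

variable {E : Type*} [NormedAddCommGroup E] [InnerProductSpace ℝ E]

theorem sum_mul_one_add_inner_eq_inner {X Y Z : E} (hX : X ≠ 0) (hY : Y ≠ 0) (hZ : Z ≠ 0)
    (p₁ p₂ p₃ : ℝ) :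
    p₁ * (1 + ⟪X, (‖Z‖ ^ 2)⁻¹ • Z + (‖Y‖ ^ 2)⁻¹ • Y⟫) +
      p₂ * (1 + ⟪Y, (‖X‖ ^ 2)⁻¹ • X + (‖Z‖ ^ 2)⁻¹ • Z⟫) +
      p₃ * (1 + ⟪Z, (‖Y‖ ^ 2)⁻¹ • Y + (‖X‖ ^ 2)⁻¹ • X⟫) =
    ⟪p₁ • X + p₂ • Y + p₃ • Z, (‖X‖ ^ 2)⁻¹ • X + (‖Y‖ ^ 2)⁻¹ • Y + (‖Z‖ ^ 2)⁻¹ • Z⟫ := by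
  have hX₂ : ‖X‖ ^ 2 ≠ 0 := by positivity
  have hY₂ : ‖Y‖ ^ 2 ≠ 0 := by positivity
  have hZ₂ : ‖Z‖ ^ 2 ≠ 0 := by positivity
  simp only [inner_add_left, inner_add_right, real_inner_smul_left, real_inner_smul_right,
    real_inner_self_eq_norm_sq, real_inner_comm Y X, real_inner_comm Z X, real_inner_comm Z Y]
  field_simp
  ring

theorem inner_smul_add_smul_nonneg {X Y : E} {a b c d : ℝ} (hXY : ‖X‖ ≤ ‖Y‖)
    (hY : ‖Y‖ ≤ ‖X + Y‖) (hab : b ≤ a) (hb : 0 ≤ b) (hcd : d ≤ c) (hd : 0 ≤ d) :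
    0 ≤ ⟪a • X + b • Y, c • X + d • Y⟫ := by
  have hsq : ‖X‖ ^ 2 ≤ ‖Y‖ ^ 2 := by gcongr
  have hinner : 0 ≤ ⟪X, Y⟫ + ‖X‖ ^ 2 / 2 := by
    have : ‖Y‖ ^ 2 ≤ ‖X + Y‖ ^ 2 := by gcongr
    rw [norm_add_sq_real] at this
    linarith
  have expand : ⟪a • X + b • Y, c • X + d • Y⟫ =
      (a * d + b * c) * (⟪X, Y⟫ + ‖X‖ ^ 2 / 2) + b * d * (‖Y‖ ^ 2 - ‖X‖ ^ 2) +
        ‖X‖ ^ 2 * ((a - b) * (c - d) + a * c + b * d) / 2 := by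
    simp only [inner_add_left, inner_add_right, real_inner_smul_left, real_inner_smul_right,
      real_inner_self_eq_norm_sq, real_inner_comm X Y]
    ring
  rw [expand]
  have ha : 0 ≤ a := hb.trans hab
  have hc : 0 ≤ c := hd.trans hcd
  have hab' : 0 ≤ a - b := sub_nonneg.2 hab
  have hcd' : 0 ≤ c - d := sub_nonneg.2 hcd
  have hsq' : 0 ≤ ‖Y‖ ^ 2 - ‖X‖ ^ 2 := sub_nonneg.2 hsq
  positivity

theorem inner_antitone_smul_nonneg_of_sorted {φ ψ : ℝ → ℝ} (hφ : AntitoneOn φ (Ioi 0))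
    (hψ : AntitoneOn ψ (Ioi 0)) {X Y Z : E} (hXYZ : X + Y + Z = 0) (hX : X ≠ 0)
    (hXY : ‖X‖ ≤ ‖Y‖) (hYZ : ‖Y‖ ≤ ‖Z‖) :
    0 ≤ ⟪φ (‖X‖ ^ 2) • X + φ (‖Y‖ ^ 2) • Y + φ (‖Z‖ ^ 2) • Z,
      ψ (‖X‖ ^ 2) • X + ψ (‖Y‖ ^ 2) • Y + ψ (‖Z‖ ^ 2) • Z⟫ := by
  have hZ : Z = -(X + Y) := eq_neg_of_add_eq_zero_right hXYZ
  have hX₂ : 0 < ‖X‖ ^ 2 := by positivity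
  have hXY₂ : ‖X‖ ^ 2 ≤ ‖Y‖ ^ 2 := by gcongr
  have hYZ₂ : ‖Y‖ ^ 2 ≤ ‖Z‖ ^ 2 := by gcongr
  have hY₂ : ‖Y‖ ^ 2 ∈ Ioi (0 : ℝ) := hX₂.trans_le hXY₂
  have hZ₂ : ‖Z‖ ^ 2 ∈ Ioi (0 : ℝ) := hY₂.out.trans_le hYZ₂
  have key := inner_smul_add_smul_nonneg (a := φ (‖X‖ ^ 2) - φ (‖Z‖ ^ 2))
    (b := φ (‖Y‖ ^ 2) - φ (‖Z‖ ^ 2)) (c := ψ (‖X‖ ^ 2) - ψ (‖Z‖ ^ 2))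
    (d := ψ (‖Y‖ ^ 2) - ψ (‖Z‖ ^ 2)) hXY (by rwa [hZ, norm_neg] at hYZ)
    (by linarith [hφ hX₂ hY₂ hXY₂]) (sub_nonneg.2 (hφ hY₂ hZ₂ hYZ₂))
    (by linarith [hψ hX₂ hY₂ hXY₂]) (sub_nonneg.2 (hψ hY₂ hZ₂ hYZ₂))
  convert key using 2 <;> rw [hZ] <;> module

theorem inner_antitone_smul_nonneg_of_add_eq_zero {φ ψ : ℝ → ℝ} (hφ : AntitoneOn φ (Ioi 0))
    (hψ : AntitoneOn ψ (Ioi 0)) {X Y Z : E} (hXYZ : X + Y + Z = 0) (hX : X ≠ 0) (hY : Y ≠ 0)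
    (hZ : Z ≠ 0) :
    0 ≤ ⟪φ (‖X‖ ^ 2) • X + φ (‖Y‖ ^ 2) • Y + φ (‖Z‖ ^ 2) • Z,
      ψ (‖X‖ ^ 2) • X + ψ (‖Y‖ ^ 2) • Y + ψ (‖Z‖ ^ 2) • Z⟫ := by
  wlog hXY : ‖X‖ ≤ ‖Y‖ generalizing X Y Z
  · convert this (X := Y) (Y := X) (by rwa [add_comm Y]) hY hX hZ (le_of_not_ge hXY) using 2 <;>
      abel
  wlog hYZ : ‖Y‖ ≤ ‖Z‖ generalizing X Y Z
  · rcases le_total ‖X‖ ‖Z‖ with hXZ | hZX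
    · convert this (Y := Z) (Z := Y) (by rwa [add_right_comm]) hX hZ hY hXZ
        (le_of_not_ge hYZ) using 2 <;> abel
    · convert inner_antitone_smul_nonneg_of_sorted hφ hψ (X := Z) (Y := X) (Z := Y)
        (by rw [← hXYZ]; abel) hZ hZX hXY using 2 <;> abel
  exact inner_antitone_smul_nonneg_of_sorted hφ hψ hXYZ hX hXY hYZ

end InnerProductSpace

theorem stmt_16 (η : ℝ) (hη : 0 < η)
    (Lη : ℝ → ℝ)
    (hLη : Lη = fun r => Real.log (1 + 1 / (η + r)) - 1 / (1 + η + r))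
    (x y z : EuclideanSpace ℝ (Fin 2))
    (hxy : x ≠ y) (hyz : y ≠ z) (hzx : z ≠ x) :
    (Lη (‖x - y‖ ^ 2) *
        (1 + ⟪x - y, (‖z - x‖ ^ 2)⁻¹ • (z - x) + (‖y - z‖ ^ 2)⁻¹ • (y - z)⟫) +
      Lη (‖y - z‖ ^ 2) *
        (1 + ⟪y - z, (‖x - y‖ ^ 2)⁻¹ • (x - y) + (‖z - x‖ ^ 2)⁻¹ • (z - x)⟫) +
      Lη (‖z - x‖ ^ 2) *
        (1 + ⟪z - x, (‖y - z‖ ^ 2)⁻¹ • (y - z) + (‖x - y‖ ^ 2)⁻¹ • (x - y)⟫)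
      = ⟪Lη (‖x - y‖ ^ 2) • (x - y) + Lη (‖y - z‖ ^ 2) • (y - z) +
            Lη (‖z - x‖ ^ 2) • (z - x),
          (‖x - y‖ ^ 2)⁻¹ • (x - y) + (‖y - z‖ ^ 2)⁻¹ • (y - z) +
            (‖z - x‖ ^ 2)⁻¹ • (z - x)⟫) ∧
    0 ≤ ⟪Lη (‖x - y‖ ^ 2) • (x - y) + Lη (‖y - z‖ ^ 2) • (y - z) +
            Lη (‖z - x‖ ^ 2) • (z - x),
          (‖x - y‖ ^ 2)⁻¹ • (x - y) + (‖y - z‖ ^ 2)⁻¹ • (y - z) +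
            (‖z - x‖ ^ 2)⁻¹ • (z - x)⟫ := by
  have hX : x - y ≠ 0 := sub_ne_zero.2 hxy
  have hY : y - z ≠ 0 := sub_ne_zero.2 hyz
  have hZ : z - x ≠ 0 := sub_ne_zero.2 hzx
  have hLη_anti : AntitoneOn Lη (Ioi 0) := by
    intro r (hr : 0 < r) s (hs : 0 < s) hrs
    have h := antitoneOn_log_one_add_inv_sub_inv_one_add (a := η + r) (b := η + s)
      (by simp only [mem_Ioi]; linarith) (by simp only [mem_Ioi]; linarith) (by linarith)
    simp only [hLη, ← add_assoc] at h ⊢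
    exact h
  refine ⟨sum_mul_one_add_inner_eq_inner hX hY hZ _ _ _, ?_⟩
  exact inner_antitone_smul_nonneg_of_add_eq_zero hLη_anti antitoneOn_inv_pos
    (by abel) hX hY hZ
end
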